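/- arXiv:2212.06887 — 2 statements merged into one kernel-verified Lean document; each statement's English description precedes it below -/
import Mathlib

section
/- Let $(a_n)$ be an injective sequence in a semigroup $S$ with no proper sumsequence, and let $A_\infty := \bigcap_{n=1}^{\infty} FS(a_n, a_{n+1}, \dots)$. Then $A_\infty$ is nonempty and is a subsemigroup of $S$ (closed under addition). -/
/-- The ordered sum `a_{i_1} + ⋯ + a_{i_m}` over a finite index set
`F = {i_1 < ⋯ < i_m}` (junk value `a 0` if `F = ∅`). -/
def ordsum {S : Type*} [AddSemigroup S] (a : ℕ → S) (F : Finset ℕ) : S :=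
  match F.sort (· ≤ ·) with
  | [] => a 0
  | i :: l => l.foldl (fun s j => s + a j) (a i)

/-- `F < G`: every element of `F` is smaller than every element of `G`. -/
def FinsetLT (F G : Finset ℕ) : Prop := ∀ i ∈ F, ∀ j ∈ G, i < j

/-- `FS(a_1, a_2, …)`: the set of all finite ordered sums of the sequence `a`. -/
def FSset {S : Type*} [AddSemigroup S] (a : ℕ → S) : Set S :=
  {s | ∃ F : Finset ℕ, F.Nonempty ∧ ordsum a F = s}

/-- `FS(a_n, a_{n+1}, …)`: finite ordered sums with all indices `≥ n`. -/
def FStail {S : Type*} [AddSemigroup S] (a : ℕ → S) (n : ℕ) : Set S :=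
  {s | ∃ F : Finset ℕ, F.Nonempty ∧ (∀ i ∈ F, n ≤ i) ∧ ordsum a F = s}

/-- A sequence is proper if `a_{F₁} ≠ a_{F₂}` whenever `F₁ < F₂`. -/
def IsProperSeq {S : Type*} [AddSemigroup S] (a : ℕ → S) : Prop :=
  ∀ F G : Finset ℕ, F.Nonempty → G.Nonempty → FinsetLT F G →
    ordsum a F ≠ ordsum a G

/-- `b` is a sumsequence of `a`: `b_k = a_{F_k}` for finite index sets `F₁ < F₂ < ⋯`. -/
def IsSumseq {S : Type*} [AddSemigroup S] (a b : ℕ → S) : Prop :=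
  ∃ F : ℕ → Finset ℕ, (∀ k, (F k).Nonempty) ∧
    (∀ k, FinsetLT (F k) (F (k + 1))) ∧ (∀ k, b k = ordsum a (F k))

/-! If `A_∞` were empty, every `s` would miss some tail `FS(a_n, a_{n+1}, …)`, say from `n = N s`
on. Choose `m₀ < m₁ < ⋯` so that `m_k > N (a_I)` for every set `I` of earlier indices `m_i`. For
`I < G` among the chosen indices, `a_G` lies in the tail from `m_{min G}` while `a_I` does not,
so the subsequence `(a_{m_k})` is a proper sumsequence. Closure under addition comes from
concatenating an index set with one lying entirely to its right. -/

section OrderedSum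

variable {S : Type*} [AddSemigroup S] (a : ℕ → S)

lemma coe_foldl_add (l : List ℕ) (x : S) :
    ((l.foldl (fun s j => s + a j) x : S) : WithZero S) =
      x + (l.map fun i => (a i : WithZero S)).sum := by
  induction l generalizing x with
  | nil => simp
  | cons j l ih => simp [ih, add_assoc]

lemma coe_ordsum {F : Finset ℕ} (hF : F.Nonempty) :
    ((ordsum a F : S) : WithZero S) =
      ((F.sort (· ≤ ·)).map fun i => (a i : WithZero S)).sum := by
  unfold ordsum
  match h : F.sort (· ≤ ·) with
  | [] => exact absurd h (List.ne_nil_of_length_pos (by simpa using hF))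
  | i :: l => simp only [coe_foldl_add, List.map_cons, List.sum_cons]

lemma ordsum_singleton (i : ℕ) : ordsum a {i} = a i := by
  simp [ordsum]

lemma Finset.sort_union_of_lt {F G : Finset ℕ} (h : FinsetLT F G) :
    (F ∪ G).sort (· ≤ ·) = F.sort (· ≤ ·) ++ G.sort (· ≤ ·) := by
  have hpw : (F.sort (· ≤ ·) ++ G.sort (· ≤ ·)).Pairwise (· < ·) :=
    List.pairwise_append.mpr ⟨F.sortedLT_sort.pairwise, G.sortedLT_sort.pairwise,
      fun i hi j hj => h i ((F.mem_sort _).mp hi) j ((G.mem_sort _).mp hj)⟩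
  have := (List.toFinset_sort (· ≤ ·) hpw.nodup).mpr (hpw.imp le_of_lt)
  rwa [List.toFinset_append, Finset.sort_toFinset, Finset.sort_toFinset] at this

lemma ordsum_union {F G : Finset ℕ} (hF : F.Nonempty) (hG : G.Nonempty) (h : FinsetLT F G) :
    ordsum a (F ∪ G) = ordsum a F + ordsum a G := by
  apply WithZero.coe_injective
  rw [WithZero.coe_add, coe_ordsum a (hF.mono Finset.subset_union_left), coe_ordsum a hF,
    coe_ordsum a hG, Finset.sort_union_of_lt h, List.map_append, List.sum_append]

lemma ordsum_image {m : ℕ → ℕ} (hm : StrictMono m) {F : Finset ℕ} (hF : F.Nonempty) :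
    ordsum a (F.image m) = ordsum (a ∘ m) F := by
  have hsort : (F.image m).sort (· ≤ ·) = (F.sort (· ≤ ·)).map m := by
    simpa [Finset.map_eq_image] using
      (StrictMonoOn.map_finsetSort ⟨m, hm.injective⟩ F (hm.strictMonoOn _)).symm
  apply WithZero.coe_injective
  rw [coe_ordsum a (hF.image m), coe_ordsum (a ∘ m) hF, hsort, List.map_map]
  rfl

end OrderedSum

lemma exists_strictMono_forall_image_lt (g : Finset ℕ → ℕ) :
    ∃ m : ℕ → ℕ, StrictMono m ∧ ∀ k, ∀ I ⊆ Finset.range k, g (I.image m) < m k := by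
  let s : ℕ → ℕ := fun n => (fun x => (Finset.range (x + 1)).powerset.sup g + x + 1)^[n] 0
  have hstep (n : ℕ) : s (n + 1) = (Finset.range (s n + 1)).powerset.sup g + s n + 1 :=
    Function.iterate_succ_apply' _ _ _
  have hs : StrictMono s := strictMono_nat_of_lt_succ fun n => by
    rw [hstep]
    omega
  refine ⟨fun k => s (k + 1), hs.comp (strictMono_id.add_const 1), fun k I hI => ?_⟩
  have hmem : I.image (fun i => s (i + 1)) ∈ (Finset.range (s k + 1)).powerset := by
    simp only [Finset.mem_powerset, Finset.image_subset_iff, Finset.mem_range]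
    exact fun i hi => Nat.lt_succ_of_le (hs.monotone (Finset.mem_range.mp (hI hi)))
  have hle := Finset.le_sup (f := g) hmem
  show _ < s (k + 1)
  rw [hstep k]
  omega

section Tails

variable {S : Type*} [AddSemigroup S] (a : ℕ → S)

lemma FStail_antitone : Antitone (FStail a) := by
  rintro n n' hnn' _ ⟨F, hF, hFn, rfl⟩
  exact ⟨F, hF, fun i hi => hnn'.trans (hFn i hi), rfl⟩

lemma add_mem_iInter_FStail {s₁ s₂ : S} (h₁ : s₁ ∈ ⋂ n, FStail a n)
    (h₂ : s₂ ∈ ⋂ n, FStail a n) : s₁ + s₂ ∈ ⋂ n, FStail a n := by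
  refine Set.mem_iInter.mpr fun n => ?_
  obtain ⟨F, hF, hFn, rfl⟩ := Set.mem_iInter.mp h₁ n
  obtain ⟨G, hG, hGF, rfl⟩ := Set.mem_iInter.mp h₂ (F.max' hF + 1)
  have hFG : FinsetLT F G := fun i hi j hj => Nat.lt_of_le_of_lt (F.le_max' i hi) (hGF j hj)
  refine ⟨F ∪ G, hF.mono Finset.subset_union_left, fun i hi => ?_, ordsum_union a hF hG hFG⟩
  rcases Finset.mem_union.mp hi with hiF | hiG
  · exact hFn i hiF
  · exact (hFn _ (F.max'_mem hF)).trans (Nat.le_of_succ_le (hGF i hiG))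

lemma isSumseq_comp {m : ℕ → ℕ} (hm : StrictMono m) : IsSumseq a (a ∘ m) := by
  refine ⟨fun k => {m k}, fun k => Finset.singleton_nonempty _, fun k i hi j hj => ?_,
    fun k => (ordsum_singleton a (m k)).symm⟩
  rw [Finset.mem_singleton] at hi hj
  exact hi ▸ hj ▸ hm k.lt_succ_self

lemma exists_isSumseq_isProperSeq_of_iInter_FStail_eq_empty (h : ⋂ n, FStail a n = ∅) :
    ∃ b, IsSumseq a b ∧ IsProperSeq b := by
  have hmiss : ∀ s, ∃ n, s ∉ FStail a n := by
    simpa [Set.eq_empty_iff_forall_notMem] using h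
  choose N hN using hmiss
  obtain ⟨m, hm, hN_lt⟩ := exists_strictMono_forall_image_lt fun J => N (ordsum a J)
  refine ⟨a ∘ m, isSumseq_comp a hm, fun I G hI hG hIG heq => ?_⟩
  set k := G.min' hG
  have hIk : I ⊆ Finset.range k := fun i hi => Finset.mem_range.mpr (hIG i hi k (G.min'_mem hG))
  have hG_mem : ordsum a (G.image m) ∈ FStail a (m k) := by
    refine ⟨G.image m, hG.image m, fun j hj => ?_, rfl⟩
    obtain ⟨g, hg, rfl⟩ := Finset.mem_image.mp hj
    exact hm.monotone (G.min'_le g hg)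
  rw [← ordsum_image a hm hI, ← ordsum_image a hm hG] at heq
  exact hN _ (FStail_antitone a (hN_lt k I hIk).le (heq ▸ hG_mem))

end Tails

theorem stmt4_general {S : Type*} [AddSemigroup S] (a : ℕ → S)
    (hnp : ¬ ∃ b : ℕ → S, IsSumseq a b ∧ IsProperSeq b) :
    (⋂ n : ℕ, FStail a n).Nonempty ∧
      ∀ s₁ ∈ (⋂ n : ℕ, FStail a n), ∀ s₂ ∈ (⋂ n : ℕ, FStail a n),
        s₁ + s₂ ∈ (⋂ n : ℕ, FStail a n) :=
  ⟨Set.nonempty_iff_ne_empty.mpr fun h =>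
      hnp (exists_isSumseq_isProperSeq_of_iInter_FStail_eq_empty a h),
    fun _ h₁ _ h₂ => add_mem_iInter_FStail a h₁ h₂⟩

theorem stmt4 {S : Type*} [AddSemigroup S] (a : ℕ → S) (ha : Function.Injective a)
    (hnp : ¬ ∃ b : ℕ → S, IsSumseq a b ∧ IsProperSeq b) :
    (⋂ n : ℕ, FStail a n).Nonempty ∧
      ∀ s₁ ∈ (⋂ n : ℕ, FStail a n), ∀ s₂ ∈ (⋂ n : ℕ, FStail a n),
        s₁ + s₂ ∈ (⋂ n : ℕ, FStail a n) :=
  stmt4_general a hnp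
end

section
/- If a sequence $(b_n)$ in a semigroup satisfies, for every $n$, $FS(b_1,\dots,b_n) \cap (FS(b_1,\dots,b_n) + b_{n+1}) = \emptyset$, and $(b_n)$ is proper, then $b_F \neq b_G$ for all disjoint finite nonempty index sets $F$ and $G$. -/
/-- A proper IP set: contains `FS(b)` for an injective sequence `b`. -/
def IsProperIP {S : Type*} [AddSemigroup S] (A : Set S) : Prop :=
  ∃ b : ℕ → S, Function.Injective b ∧ FSset b ⊆ A

/-- Partition regularity of the family of proper IP sets of `S`. -/
def ProperIPPartReg (S : Type*) [AddSemigroup S] : Prop :=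
  ∀ A : Set S, IsProperIP A → ∀ (k : ℕ) (c : S → Fin k),
    ∃ i : Fin k, IsProperIP {s ∈ A | c s = i}

/-- `FS(b_0, …, b_{n-1})`: ordered sums over nonempty `F ⊆ {0, …, n-1}`. -/
def FSfin {S : Type*} [AddSemigroup S] (a : ℕ → S) (n : ℕ) : Set S :=
  {s | ∃ F : Finset ℕ, F.Nonempty ∧ F ⊆ Finset.range n ∧ ordsum a F = s}

/-- `FS_{≥2}(a)`: ordered sums with at least two summands. -/
def FS2set {S : Type*} [AddSemigroup S] (a : ℕ → S) : Set S :=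
  {s | ∃ F : Finset ℕ, 2 ≤ F.card ∧ ordsum a F = s}

/-!
Compare the largest indices of `F` and `G`; by symmetry `max F < max G =: m`. If `G = {m}`,
properness applied to `F < {m}` gives `b_F ≠ b_m`. Otherwise `b_G = b_{G'} + b_m` with
`G' = G \ {m}`, and `b_F`, `b_{G'}` both lie in `FS(b_0, …, b_{m-1})`, so `b_F = b_G` would put
`b_{G'} + b_m` back into that set, which the hypothesis forbids.
-/

theorem Finset.sort_insert_of_forall_lt {α : Type*} [LinearOrder α] {m : α} {F : Finset α}
    (h : ∀ i ∈ F, i < m) : (insert m F).sort = F.sort ++ [m] := by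
  refine (sortedLT_sort _).pairwise.eq_of_mem_iff ?_ fun a => ?_
  · simpa [List.pairwise_append, (sortedLT_sort F).pairwise] using h
  · simp [or_comm]

theorem ordsum_insert_of_forall_lt {S : Type*} [AddSemigroup S] (a : ℕ → S) {m : ℕ}
    {F : Finset ℕ} (hF : F.Nonempty) (h : ∀ i ∈ F, i < m) :
    ordsum a (insert m F) = ordsum a F + a m := by
  unfold ordsum
  rw [Finset.sort_insert_of_forall_lt h]
  obtain ⟨i, l, hs⟩ : ∃ i l, F.sort (· ≤ ·) = i :: l :=
    List.exists_cons_of_ne_nil (by simpa [← List.length_pos_iff] using hF.card_pos)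
  simp only [hs, List.cons_append, List.foldl_append, List.foldl_cons, List.foldl_nil]

section

variable {S : Type*} [AddSemigroup S] {b : ℕ → S}

theorem ordsum_mem_FSfin {F : Finset ℕ} {n : ℕ} (hF : F.Nonempty) (h : ∀ i ∈ F, i < n) :
    ordsum b F ∈ FSfin b n :=
  ⟨F, hF, fun i hi => Finset.mem_range.2 (h i hi), rfl⟩

theorem ordsum_ne_of_forall_lt_max'
    (h2 : ∀ n : ℕ, ∀ x ∈ FSfin b (n + 1), x + b (n + 1) ∉ FSfin b (n + 1))
    (hp : IsProperSeq b) {F G : Finset ℕ} (hF : F.Nonempty) (hG : G.Nonempty)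
    (hFG : ∀ i ∈ F, i < G.max' hG) : ordsum b F ≠ ordsum b G := by
  set m := G.max' hG
  have hG' : ∀ i ∈ G.erase m, i < m := fun i => G.lt_max'_of_mem_erase_max' hG
  rcases (G.erase m).eq_empty_or_nonempty with hGm | hGm
  · have hG_eq : G = {m} := by
      rw [← Finset.insert_erase (G.max'_mem hG), hGm]; rfl
    rw [hG_eq]
    exact hp F {m} hF (Finset.singleton_nonempty m) fun i hi j hj =>
      Finset.mem_singleton.1 hj ▸ hFG i hi
  · obtain ⟨n, hn⟩ : ∃ n, m = n + 1 :=
      Nat.exists_eq_add_one.2 (hGm.elim fun i hi => (Nat.zero_le i).trans_lt (hG' i hi))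
    rw [← Finset.insert_erase (G.max'_mem hG), ordsum_insert_of_forall_lt b hGm hG']
    intro hsum
    refine h2 n _ (hn ▸ ordsum_mem_FSfin hGm hG') ?_
    rw [← hn, ← hsum]
    exact ordsum_mem_FSfin hF hFG

end

theorem stmt12 {S : Type*} [AddSemigroup S] (b : ℕ → S)
    (h2 : ∀ n : ℕ, ∀ x ∈ FSfin b (n + 1), x + b (n + 1) ∉ FSfin b (n + 1))
    (hp : IsProperSeq b) :
    ∀ F G : Finset ℕ, F.Nonempty → G.Nonempty → Disjoint F G →
      ordsum b F ≠ ordsum b G := by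
  intro F G hF hG hFG
  have hmax : F.max' hF ≠ G.max' hG := fun h =>
    Finset.disjoint_left.1 hFG (F.max'_mem hF) (h ▸ G.max'_mem hG)
  rcases hmax.lt_or_gt with hlt | hgt
  · exact ordsum_ne_of_forall_lt_max' h2 hp hF hG fun i hi => (F.le_max' i hi).trans_lt hlt
  · exact (ordsum_ne_of_forall_lt_max' h2 hp hG hF fun i hi => (G.le_max' i hi).trans_lt hgt).symm
end
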